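/- arXiv:math/0602576 — 2 statements merged into one kernel-verified Lean document; each statement's English description precedes it below -/
import Mathlib

section
/- Let M be a (2n+1)-dimensional real vector space, α a nonzero linear functional on M, and ω an alternating 2-form on M. If the (2n+1)-form α ∧ ω^n is nonzero, then the restriction of ω to ker α is a nondegenerate 2-form on the 2n-dimensional subspace ker α. -/
open scoped TensorProduct

/-- Wedge product of two real-valued alternating forms indexed by `Fin`. -/
noncomputable def wedgeFin {M : Type*} [AddCommGroup M] [Module ℝ M] {a b : ℕ}
    (f : M [⋀^Fin a]→ₗ[ℝ] ℝ) (g : M [⋀^Fin b]→ₗ[ℝ] ℝ) :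
    M [⋀^Fin (a + b)]→ₗ[ℝ] ℝ :=
  ((TensorProduct.lid ℝ ℝ).toLinearMap.compAlternatingMap
    (f.domCoprod g)).domDomCongr finSumFinEquiv

/-- `n`-th wedge power of a 2-form. -/
noncomputable def wpow {M : Type*} [AddCommGroup M] [Module ℝ M]
    (ω : M [⋀^Fin 2]→ₗ[ℝ] ℝ) : (n : ℕ) → M [⋀^Fin (2 * n)]→ₗ[ℝ] ℝ
  | 0 => (AlternatingMap.constOfIsEmpty ℝ M (Fin 0) 1).domDomCongr (finCongr (by omega))
  | n + 1 => (wedgeFin ω (wpow ω n)).domDomCongr (finCongr (by ring))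

/-- A linear functional as a 1-form (alternating map on `Fin 1`). -/
noncomputable def oneForm {M : Type*} [AddCommGroup M] [Module ℝ M]
    (α : M →ₗ[ℝ] ℝ) : M [⋀^Fin 1]→ₗ[ℝ] ℝ :=
  AlternatingMap.ofSubsingleton ℝ M ℝ (0 : Fin 1) α

/-! ### Auxiliary lemmas -/

theorem domCoprod_comp_aux {M N : Type*} [AddCommGroup M] [Module ℝ M]
    [AddCommGroup N] [Module ℝ N] {a b : ℕ}
    (π : N →ₗ[ℝ] M) (f : M [⋀^Fin a]→ₗ[ℝ] ℝ) (g : M [⋀^Fin b]→ₗ[ℝ] ℝ)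
    (z : Fin a ⊕ Fin b → N) :
    ((f.compLinearMap π).domCoprod (g.compLinearMap π)) z
      = (f.domCoprod g) (fun i => π (z i)) := by
  show (∑ σ : Equiv.Perm.ModSumCongr (Fin a) (Fin b),
      AlternatingMap.domCoprod.summand (f.compLinearMap π) (g.compLinearMap π) σ) z
    = (∑ σ : Equiv.Perm.ModSumCongr (Fin a) (Fin b),
      AlternatingMap.domCoprod.summand f g σ) (fun i => π (z i))
  rw [MultilinearMap.sum_apply, MultilinearMap.sum_apply]
  refine Finset.sum_congr rfl fun σ _ => ?_
  induction σ using Quotient.inductionOn with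
  | h σ =>
    simp [AlternatingMap.domCoprod.summand_mk'', MultilinearMap.domDomCongr_apply,
      MultilinearMap.domCoprod_apply, Function.comp]

theorem wedgeFin_comp {M N : Type*} [AddCommGroup M] [Module ℝ M]
    [AddCommGroup N] [Module ℝ N] {a b : ℕ}
    (π : N →ₗ[ℝ] M) (f : M [⋀^Fin a]→ₗ[ℝ] ℝ) (g : M [⋀^Fin b]→ₗ[ℝ] ℝ) :
    (wedgeFin f g).compLinearMap π = wedgeFin (f.compLinearMap π) (g.compLinearMap π) := by
  ext x
  simp only [wedgeFin, AlternatingMap.compLinearMap_apply, AlternatingMap.domDomCongr_apply,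
    LinearMap.compAlternatingMap_apply]
  rw [domCoprod_comp_aux]
  rfl

theorem wpow_comp {M N : Type*} [AddCommGroup M] [Module ℝ M]
    [AddCommGroup N] [Module ℝ N]
    (π : N →ₗ[ℝ] M) (ω : M [⋀^Fin 2]→ₗ[ℝ] ℝ) (n : ℕ) :
    (wpow ω n).compLinearMap π = wpow (ω.compLinearMap π) n := by
  induction n with
  | zero =>
    ext x
    simp [wpow, AlternatingMap.compLinearMap_apply, AlternatingMap.domDomCongr_apply]
  | succ n ih =>
    ext x
    simp only [wpow, AlternatingMap.compLinearMap_apply, AlternatingMap.domDomCongr_apply]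
    rw [← ih, ← wedgeFin_comp]
    rfl

/-- The bilinear form associated to an alternating 2-form. -/
noncomputable def bform {M : Type*} [AddCommGroup M] [Module ℝ M]
    (ω : M [⋀^Fin 2]→ₗ[ℝ] ℝ) : M →ₗ[ℝ] M →ₗ[ℝ] ℝ :=
  LinearMap.mk₂ ℝ (fun x y => ω ![x, y])
    (fun x x' y => ω.map_vecCons_add ![y] x x')
    (fun c x y => ω.map_vecCons_smul ![y] c x)
    (fun x y y' => (ω.curryLeft x).map_vecCons_add ![] y y')
    (fun c x y => (ω.curryLeft x).map_vecCons_smul ![] c y)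

@[simp] theorem bform_apply {M : Type*} [AddCommGroup M] [Module ℝ M]
    (ω : M [⋀^Fin 2]→ₗ[ℝ] ℝ) (x y : M) : bform ω x y = ω ![x, y] := rfl

theorem bform_alt {M : Type*} [AddCommGroup M] [Module ℝ M]
    (ω : M [⋀^Fin 2]→ₗ[ℝ] ℝ) (x : M) : bform ω x x = 0 :=
  ω.map_eq_zero_of_eq ![x, x] (i := 0) (j := 1) rfl (by decide)

theorem bform_skew {M : Type*} [AddCommGroup M] [Module ℝ M]
    (ω : M [⋀^Fin 2]→ₗ[ℝ] ℝ) (x y : M) : bform ω x y = - bform ω y x := by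
  have h := bform_alt ω (x + y)
  simp only [map_add, LinearMap.add_apply, bform_alt] at h
  linarith

theorem omega_eval {M : Type*} [AddCommGroup M] [Module ℝ M]
    (ω : M [⋀^Fin 2]→ₗ[ℝ] ℝ) (z : Fin 2 → M) : ω z = bform ω (z 0) (z 1) := by
  have : z = ![z 0, z 1] := funext (Fin.cases rfl (Fin.cases rfl (fun i => i.elim0)))
  rw [bform_apply, ← this]

open Matrix in
/-- Any alternating 2-form on an odd-dimensional real vector space has a nonzero radical
vector. -/
theorem radical_exists {M : Type*} [AddCommGroup M] [Module ℝ M] [FiniteDimensional ℝ M]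
    (n : ℕ) (hdim : Module.finrank ℝ M = 2 * n + 1) (ω : M [⋀^Fin 2]→ₗ[ℝ] ℝ) :
    ∃ r : M, r ≠ 0 ∧ ∀ x : M, bform ω r x = 0 := by
  have b0 := Module.finBasis ℝ M
  rw [hdim] at b0
  set b := b0
  set A : Matrix (Fin (2 * n + 1)) (Fin (2 * n + 1)) ℝ :=
    Matrix.of (fun i j => bform ω (b i) (b j)) with hA
  have hAT : Aᵀ = -A := by
    ext i j
    simp only [Matrix.transpose_apply, Matrix.neg_apply, hA, Matrix.of_apply]
    exact (bform_skew ω (b j) (b i)).symm ▸ (bform_skew ω (b j) (b i)).symm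
  have hdet : A.det = 0 := by
    have h1 : A.det = Aᵀ.det := (Matrix.det_transpose A).symm
    rw [hAT, Matrix.det_neg] at h1
    have : ((-1 : ℝ)) ^ (2 * n + 1) = -1 := by
      rw [pow_succ, pow_mul, neg_one_sq, one_pow, one_mul]
    rw [Fintype.card_fin, this] at h1
    linarith
  obtain ⟨c, hc0, hc⟩ := (Matrix.exists_mulVec_eq_zero_iff).2 hdet
  set r := b.equivFun.symm c with hr
  have key : ∀ i, bform ω (b i) r = 0 := by
    intro i
    have h := congrFun hc i
    simp only [Matrix.mulVec, dotProduct, hA, Matrix.of_apply, Pi.zero_apply] at h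
    rw [hr, Module.Basis.equivFun_symm_apply, map_sum]
    simp only [_root_.map_smul, smul_eq_mul]
    rw [← h]
    exact Finset.sum_congr rfl fun j _ => mul_comm _ _
  have key2 : ∀ x, bform ω x r = 0 := by
    intro x
    have h0 : (bform ω).flip r = 0 := b.ext fun i => key i
    exact LinearMap.congr_fun h0 x
  refine ⟨r, ?_, fun x => by rw [bform_skew, key2 x, neg_zero]⟩
  simp only [hr, ne_eq, EmbeddingLike.map_eq_zero_iff]
  exact hc0

/-- If a nonzero vector in `ker α` is in the (global) radical of `ω`, then `α ∧ ω^n = 0`. -/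
theorem vanish {M : Type*} [AddCommGroup M] [Module ℝ M] [FiniteDimensional ℝ M]
    (n : ℕ) (hdim : Module.finrank ℝ M = 2 * n + 1)
    (α : M →ₗ[ℝ] ℝ) (ω : M [⋀^Fin 2]→ₗ[ℝ] ℝ) (v : M) (hv : v ≠ 0)
    (hvα : α v = 0) (hrad : ∀ x, bform ω v x = 0) :
    wedgeFin (oneForm α) (wpow ω n) = 0 := by
  obtain ⟨φ, hφ⟩ : ∃ φ : Module.Dual ℝ M, φ v ≠ 0 := by
    by_contra h
    push_neg at h
    exact hv ((Module.forall_dual_apply_eq_zero_iff ℝ v).mp h)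
  set lam : M →ₗ[ℝ] ℝ := (φ v)⁻¹ • φ with hlamdef
  have hlam : lam v = 1 := by
    simp [hlamdef, LinearMap.smul_apply, inv_mul_cancel₀ hφ]
  set π : M →ₗ[ℝ] M := LinearMap.id - lam.smulRight v with hπ
  have hπ_apply : ∀ x, π x = x - lam x • v := fun x => rfl
  have hπv : π v = 0 := by rw [hπ_apply, hlam, one_smul, sub_self]
  have hbv : ∀ x, bform ω x v = 0 := fun x => by rw [bform_skew, hrad, neg_zero]
  have hω : ω.compLinearMap π = ω := by
    ext z
    rw [AlternatingMap.compLinearMap_apply, omega_eval ω (fun i => π (z i)), omega_eval ω z]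
    show bform ω (π (z 0)) (π (z 1)) = _
    rw [hπ_apply, hπ_apply]
    simp [map_sub, _root_.map_smul, hrad, hbv]
  have hα : (oneForm α).compLinearMap π = oneForm α := by
    ext z
    rw [AlternatingMap.compLinearMap_apply]
    show α (π (z 0)) = α (z 0)
    rw [hπ_apply, map_sub, _root_.map_smul, hvα, smul_zero, sub_zero]
  have hF : (wedgeFin (oneForm α) (wpow ω n)).compLinearMap π
      = wedgeFin (oneForm α) (wpow ω n) := by
    rw [wedgeFin_comp, wpow_comp, hω, hα]
  have hker : 0 < Module.finrank ℝ (LinearMap.ker π) := by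
    rcases Nat.eq_zero_or_pos (Module.finrank ℝ (LinearMap.ker π)) with h | h
    · exfalso
      rw [Submodule.finrank_eq_zero] at h
      exact hv (by simpa [h, Submodule.mem_bot] using
        (LinearMap.mem_ker.mpr hπv : v ∈ LinearMap.ker π))
    · exact h
  have hrange : Module.finrank ℝ (LinearMap.range π) ≤ 2 * n := by
    have := LinearMap.finrank_range_add_finrank_ker π
    omega
  ext x
  rw [← hF, AlternatingMap.compLinearMap_apply, AlternatingMap.zero_apply]
  refine AlternatingMap.map_linearDependent _ _ ?_
  intro li
  have hcard : Module.finrank ℝ (Submodule.span ℝ (Set.range fun i => π (x i)))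
      = 2 * n + 1 := by
    rw [finrank_span_eq_card li, Fintype.card_fin]
    omega
  have hle : Submodule.span ℝ (Set.range fun i => π (x i)) ≤ LinearMap.range π := by
    rw [Submodule.span_le]
    rintro _ ⟨i, rfl⟩
    exact ⟨x i, rfl⟩
  have := Submodule.finrank_mono hle
  omega

/-- if `α ∧ ω^n ≠ 0` on a `(2n+1)`-dimensional real vector space,
then `ω` restricts nondegenerately to `ker α`. -/
theorem stmt2 {M : Type*} [AddCommGroup M] [Module ℝ M] [FiniteDimensional ℝ M]
    (n : ℕ) (hdim : Module.finrank ℝ M = 2 * n + 1)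
    (α : M →ₗ[ℝ] ℝ) (hα : α ≠ 0)
    (ω : M [⋀^Fin 2]→ₗ[ℝ] ℝ)
    (hvol : wedgeFin (oneForm α) (wpow ω n) ≠ 0) :
    ∀ v ∈ LinearMap.ker α, v ≠ 0 → ∃ w ∈ LinearMap.ker α, ω ![v, w] ≠ 0 := by
  intro v hvker hv0
  by_contra hcon
  push_neg at hcon
  have hcon' : ∀ w ∈ LinearMap.ker α, bform ω v w = 0 := fun w hw => hcon w hw
  have hvα : α v = 0 := LinearMap.mem_ker.mp hvker
  obtain ⟨r, hr0, hrad⟩ := radical_exists n hdim ω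
  rcases eq_or_ne (α r) 0 with hrα | hrα
  · exact hvol (vanish n hdim α ω r hr0 hrα hrad)
  · -- `v` is in the global radical of `ω`
    have hrad' : ∀ x, bform ω v x = 0 := by
      intro x
      have hk : x - (α x / α r) • r ∈ LinearMap.ker α := by
        rw [LinearMap.mem_ker, map_sub, _root_.map_smul, smul_eq_mul,
          div_mul_cancel₀ _ hrα, sub_self]
      have h1 : bform ω v (x - (α x / α r) • r) = 0 := hcon' _ hk
      have h2 : bform ω v r = 0 := by rw [bform_skew, hrad, neg_zero]
      rw [map_sub, _root_.map_smul, h2, smul_zero, sub_zero] at h1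
      exact h1
    exact hvol (vanish n hdim α ω v hv0 hvα hrad')
end

section
/- Let M be a (2n+1)-dimensional real vector space, α a nonzero linear functional and ω an alternating 2-form such that α ∧ ω^n ≠ 0. Then there exists a unique vector R ∈ M with ω(R, ·) = 0 and α(R) = 1. -/
/-!
As a bilinear form, `ω` is alternating, so its Gram matrix satisfies `Aᵀ = -A`; in odd dimension
this forces `det A = 0`, so the radical of `ω` is nonzero. A vector in both the radical of `ω` and
the kernel of `α` lies in the radical of the top-degree form `α ∧ ωⁿ`, which therefore vanishes.
Hence the radical of `ω` is a nonzero subspace meeting `ker α` trivially, i.e. a line on which `α`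
does not vanish, and `R` is its unique point with `α R = 1`.
-/

open scoped TensorProduct

theorem LinearMap.BilinForm.IsAlt.ker_ne_bot_of_odd_finrank {K V : Type*} [Field K]
    [NeZero (2 : K)] [AddCommGroup V] [Module K V] [FiniteDimensional K V]
    {B : LinearMap.BilinForm K V} (hB : B.IsAlt) (hodd : Odd (Module.finrank K V)) :
    LinearMap.ker B ≠ ⊥ := by
  let b := Module.finBasis K V
  set A := LinearMap.BilinForm.toMatrix b B
  have hskew : A.transpose = -A := by
    ext i j
    simpa [A, LinearMap.BilinForm.toMatrix_apply] using (hB.neg_eq _ _).symm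
  have hdet : A.det = 0 := by
    have h := congrArg Matrix.det hskew
    rw [Matrix.det_transpose, Matrix.det_neg, Fintype.card_fin, hodd.neg_one_pow, neg_one_mul,
      eq_neg_iff_add_eq_zero, ← two_mul] at h
    exact (mul_eq_zero.1 h).resolve_left two_ne_zero
  rw [Ne, ← LinearMap.separatingLeft_iff_ker_eq_bot, ← hB.isRefl.nondegenerate_iff_separatingLeft]
  exact fun h => (LinearMap.BilinForm.nondegenerate_iff_det_ne_zero b).1 h hdet

namespace AlternatingMap

section Bilinear

variable {R M N : Type*} [CommSemiring R] [AddCommMonoid M] [Module R M]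
  [AddCommMonoid N] [Module R N]

def toLinearMap₂ (ω : M [⋀^Fin 2]→ₗ[R] N) : M →ₗ[R] M →ₗ[R] N :=
  LinearMap.mk₂ R (fun v w => ω ![v, w])
    (fun _ _ _ => ω.map_vecCons_add _ _ _) (fun _ _ _ => ω.map_vecCons_smul _ _ _)
    (fun u _ _ => (ω.curryLeft u).map_vecCons_add _ _ _)
    (fun _ u _ => (ω.curryLeft u).map_vecCons_smul _ _ _)

@[simp]
theorem toLinearMap₂_apply (ω : M [⋀^Fin 2]→ₗ[R] N) (v w : M) :
    ω.toLinearMap₂ v w = ω ![v, w] :=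
  rfl

theorem isAlt_toLinearMap₂ (ω : M [⋀^Fin 2]→ₗ[R] N) : ω.toLinearMap₂.IsAlt :=
  fun v => ω.map_eq_zero_of_eq ![v, v] (i := 0) (j := 1) rfl (by decide)

end Bilinear

section Radical

variable {R M N : Type*} [CommSemiring R] [AddCommMonoid M] [Module R M]
  [AddCommMonoid N] [Module R N]

/-- The vectors `v` with interior product `ι_v f = 0`. -/
def radical {ι : Type*} (f : M [⋀^ι]→ₗ[R] N) : Set M :=
  {v | ∀ (x : ι → M) (i : ι), x i = v → f x = 0}

theorem radical_domDomCongr {ι κ : Type*} (f : M [⋀^ι]→ₗ[R] N) (e : ι ≃ κ) :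
    (f.domDomCongr e).radical = f.radical := by
  ext v
  refine ⟨fun h x i hx => ?_, fun h x i hx => h _ (e.symm i) (by simpa using hx)⟩
  simpa [Function.comp_def] using h (x ∘ e.symm) (e i) (by simpa using hx)

theorem mem_radical_of_mem_ker_toLinearMap₂ {N : Type*} [AddCommGroup N] [Module R N]
    {ω : M [⋀^Fin 2]→ₗ[R] N} {v : M}
    (hv : v ∈ LinearMap.ker ω.toLinearMap₂) : v ∈ ω.radical := by
  have hv' (w : M) : ω ![v, w] = 0 := LinearMap.congr_fun hv w
  intro x i hx
  fin_cases i
  · convert hv' (x 1) using 2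
    ext j; fin_cases j <;> simp [← hx]
  · rw [← neg_eq_zero, ← ω.map_swap x (i := 0) (j := 1) (by decide)]
    convert hv' (x 0) using 2
    ext j; fin_cases j <;> simp [← hx]

end Radical

section RealForms

variable {M : Type*} [AddCommGroup M] [Module ℝ M]

theorem radical_inter_subset_radical_wedgeFin {a b : ℕ}
    (f : M [⋀^Fin a]→ₗ[ℝ] ℝ) (g : M [⋀^Fin b]→ₗ[ℝ] ℝ) :
    f.radical ∩ g.radical ⊆ (wedgeFin f g).radical := by
  rintro v ⟨hf, hg⟩
  rw [wedgeFin, radical_domDomCongr]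
  intro x i hx
  rw [LinearMap.compAlternatingMap_apply, domCoprod_apply, sum_apply, Finset.sum_eq_zero,
    LinearMap.map_zero]
  intro σ _
  induction σ using Quotient.inductionOn' with
  | h σ =>
    rw [domCoprod.summand_mk'']
    simp only [_root_.smul_apply, MultilinearMap.domDomCongr_apply,
      MultilinearMap.domCoprod_apply, coe_multilinearMap]
    rcases hσi : σ.symm i with k | k
    · rw [hf _ k (by simp [← hσi, hx]), TensorProduct.zero_tmul, smul_zero]
    · rw [hg _ k (by simp [← hσi, hx]), TensorProduct.tmul_zero, smul_zero]

theorem radical_subset_radical_wpow (ω : M [⋀^Fin 2]→ₗ[ℝ] ℝ) (n : ℕ) :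
    ω.radical ⊆ (wpow ω n).radical := by
  induction n with
  | zero => exact fun _ _ _ i _ => absurd i.2 (by omega)
  | succ n ih =>
    rw [wpow, radical_domDomCongr]
    exact fun v hv => radical_inter_subset_radical_wedgeFin _ _ ⟨hv, ih hv⟩

theorem ker_subset_radical_oneForm (α : M →ₗ[ℝ] ℝ) :
    (LinearMap.ker α : Set M) ⊆ (oneForm α).radical := by
  intro v hv x i hx
  obtain rfl := Subsingleton.elim i 0
  simpa [oneForm, hx] using hv

end RealForms

theorem eq_zero_of_mem_radical {K M N ι : Type*} [Field K] [AddCommGroup M] [Module K M]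
    [FiniteDimensional K M] [AddCommGroup N] [Module K N] [Fintype ι]
    (f : M [⋀^ι]→ₗ[K] N) (hι : Fintype.card ι = Module.finrank K M) {v : M} (hv0 : v ≠ 0)
    (hv : v ∈ f.radical) : f = 0 := by
  -- test `f` on a basis through `v`: every injective family of its vectors contains `v`
  have hli : LinearIndepOn K id ({v} : Set M) := .singleton hv0
  let b := Module.Basis.extend hli
  have := FiniteDimensional.fintypeBasisIndex b
  let jv : hli.extend (Set.subset_univ _) := ⟨v, hli.subset_extend _ rfl⟩
  refine b.ext_alternating fun σ hσ => ?_
  obtain ⟨i, hi⟩ : ∃ i, σ i = jv :=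
    ((Fintype.bijective_iff_injective_and_card σ).2
      ⟨hσ, by rw [hι, Module.finrank_eq_card_basis b]⟩).2 jv
  exact hv _ i (by rw [hi]; exact Module.Basis.extend_apply_self hli jv)

end AlternatingMap

theorem Submodule.existsUnique_mem_and_eq_one {K V : Type*} [Field K] [AddCommGroup V]
    [Module K V] {W : Submodule K V} {α : V →ₗ[K] K} (hW : W ≠ ⊥)
    (hWα : Disjoint W (LinearMap.ker α)) : ∃! R, R ∈ W ∧ α R = 1 := by
  rw [Submodule.disjoint_def] at hWα
  obtain ⟨v, hvW, hv0⟩ := W.exists_mem_ne_zero_of_ne_bot hW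
  have hαv : α v ≠ 0 := fun h => hv0 (hWα v hvW h)
  refine ⟨(α v)⁻¹ • v, ⟨W.smul_mem _ hvW, by simp [hαv]⟩, ?_⟩
  rintro R ⟨hRW, hRα⟩
  refine sub_eq_zero.1 (hWα _ (W.sub_mem hRW (W.smul_mem _ hvW)) ?_)
  simp [hRα, hαv]

theorem disjoint_ker_toLinearMap₂_ker {M : Type*} [AddCommGroup M] [Module ℝ M]
    [FiniteDimensional ℝ M] {n : ℕ} (hdim : Module.finrank ℝ M = 2 * n + 1)
    {α : M →ₗ[ℝ] ℝ} {ω : M [⋀^Fin 2]→ₗ[ℝ] ℝ} (hvol : wedgeFin (oneForm α) (wpow ω n) ≠ 0) :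
    Disjoint (LinearMap.ker ω.toLinearMap₂) (LinearMap.ker α) := by
  refine Submodule.disjoint_def.2 fun v hvω hvα => ?_
  by_contra hv0
  refine hvol (AlternatingMap.eq_zero_of_mem_radical _ (by rw [Fintype.card_fin, hdim]; ring) hv0
    (AlternatingMap.radical_inter_subset_radical_wedgeFin _ _ ⟨?_, ?_⟩))
  · exact AlternatingMap.ker_subset_radical_oneForm α hvα
  · exact AlternatingMap.radical_subset_radical_wpow ω n
      (AlternatingMap.mem_radical_of_mem_ker_toLinearMap₂ hvω)

theorem stmt3_general {M : Type*} [AddCommGroup M] [Module ℝ M] [FiniteDimensional ℝ M]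
    (n : ℕ) (hdim : Module.finrank ℝ M = 2 * n + 1)
    (α : M →ₗ[ℝ] ℝ)
    (ω : M [⋀^Fin 2]→ₗ[ℝ] ℝ)
    (hvol : wedgeFin (oneForm α) (wpow ω n) ≠ 0) :
    ∃! R : M, (∀ w : M, ω ![R, w] = 0) ∧ α R = 1 := by
  have hrad : LinearMap.ker ω.toLinearMap₂ ≠ ⊥ :=
    LinearMap.BilinForm.IsAlt.ker_ne_bot_of_odd_finrank (AlternatingMap.isAlt_toLinearMap₂ ω)
      (hdim ▸ odd_two_mul_add_one n)
  simpa only [LinearMap.mem_ker, LinearMap.ext_iff, AlternatingMap.toLinearMap₂_apply,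
    LinearMap.zero_apply] using
    Submodule.existsUnique_mem_and_eq_one hrad (disjoint_ker_toLinearMap₂_ker hdim hvol)

/-- the Reeb vector of a linear cosymplectic structure: if
`α ∧ ω^n ≠ 0` on a `(2n+1)`-dimensional real vector space then there is a
unique vector `R` with `ω(R,·) = 0` and `α(R) = 1`. -/
theorem stmt3 {M : Type*} [AddCommGroup M] [Module ℝ M] [FiniteDimensional ℝ M]
    (n : ℕ) (hdim : Module.finrank ℝ M = 2 * n + 1)
    (α : M →ₗ[ℝ] ℝ) (hα : α ≠ 0)
    (ω : M [⋀^Fin 2]→ₗ[ℝ] ℝ)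
    (hvol : wedgeFin (oneForm α) (wpow ω n) ≠ 0) :
    ∃! R : M, (∀ w : M, ω ![R, w] = 0) ∧ α R = 1 :=
  stmt3_general n hdim α ω hvol
end
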